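/- arXiv:1111.0081 — 3 statements merged into one kernel-verified Lean document; each statement's English description precedes it below -/
import Mathlib

section
/- Let X be a CAT(0) space and Y ⊆ X a ν-quasiconvex subset. Then for every i ≥ 1, conv^i(Y) is contained in the iν-neighborhood of Y. -/
open Set Metric

/-- `S` is a geodesic segment from `x` to `y`: the image of a constant-speed
geodesic parametrized on `[0,1]`. -/
def IsGeodSeg {X : Type*} [MetricSpace X] (S : Set X) (x y : X) : Prop :=
  ∃ γ : ℝ → X, γ 0 = x ∧ γ 1 = y ∧
    (∀ s ∈ Set.Icc (0:ℝ) 1, ∀ t ∈ Set.Icc (0:ℝ) 1,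
      dist (γ s) (γ t) = |s - t| * dist x y) ∧ S = γ '' Set.Icc 0 1

/-- `conv¹(A)`: the union of all geodesic segments `seg x y` with endpoints in `A`. -/
def conv1 {X : Type*} [MetricSpace X] (seg : X → X → Set X) (A : Set X) : Set X :=
  ⋃ x ∈ A, ⋃ y ∈ A, seg x y

/-- The iterates `convⁱ(A)`. -/
def convIter {X : Type*} [MetricSpace X] (seg : X → X → Set X) : ℕ → Set X → Set X
  | 0, A => A
  | (i+1), A => conv1 seg (convIter seg i A)

/-- A set is convex if it contains the geodesic segment between any two of its points. -/
def SegConvex {X : Type*} [MetricSpace X] (seg : X → X → Set X) (C : Set X) : Prop :=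
  ∀ x ∈ C, ∀ y ∈ C, seg x y ⊆ C

/-- The convex hull: the smallest convex set containing `Y`. -/
def segConvHull {X : Type*} [MetricSpace X] (seg : X → X → Set X) (Y : Set X) : Set X :=
  ⋂₀ {C | SegConvex seg C ∧ Y ⊆ C}

/-- The CAT(0) comparison inequality: for any constant-speed geodesic `γ` from `x` to `y`
(parametrized on `[0,1]`) and any point `p`,
`d(p, γ t)² ≤ (1−t) d(p,x)² + t d(p,y)² − t(1−t) d(x,y)²`. -/
def CAT0Ineq (X : Type*) [MetricSpace X] : Prop :=
  ∀ x y : X, ∀ γ : ℝ → X, γ 0 = x → γ 1 = y →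
    (∀ s ∈ Set.Icc (0:ℝ) 1, ∀ t ∈ Set.Icc (0:ℝ) 1,
      dist (γ s) (γ t) = |s - t| * dist x y) →
    ∀ p : X, ∀ t ∈ Set.Icc (0:ℝ) 1,
      dist p (γ t) ^ 2 ≤ (1 - t) * dist p x ^ 2 + t * dist p y ^ 2
        - t * (1 - t) * dist x y ^ 2

lemma common_start {X : Type*} [MetricSpace X] (hcat : CAT0Ineq X)
    (p q q' : X) (γ η : ℝ → X)
    (hγ0 : γ 0 = p) (hγ1 : γ 1 = q)
    (hγd : ∀ s ∈ Icc (0:ℝ) 1, ∀ t ∈ Icc (0:ℝ) 1, dist (γ s) (γ t) = |s - t| * dist p q)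
    (hη0 : η 0 = p) (hη1 : η 1 = q')
    (hηd : ∀ s ∈ Icc (0:ℝ) 1, ∀ t ∈ Icc (0:ℝ) 1, dist (η s) (η t) = |s - t| * dist p q')
    (t : ℝ) (ht : t ∈ Icc (0:ℝ) 1) :
    dist (γ t) (η t) ≤ t * dist q q' := by
  have A := hcat p q' η hη0 hη1 hηd (γ t) t ht
  have B := hcat p q γ hγ0 hγ1 hγd q' t ht
  have hγtp : dist (γ t) p = t * dist p q := by
    have h := hγd t ht 0 ⟨le_refl 0, zero_le_one⟩
    rw [hγ0] at h
    simpa [abs_of_nonneg ht.1] using h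
  rw [dist_comm q' (γ t), dist_comm q' p, dist_comm q' q] at B
  have h1 : (0:ℝ) ≤ dist (γ t) (η t) := dist_nonneg
  have h2 : (0:ℝ) ≤ t * dist q q' := mul_nonneg ht.1 dist_nonneg
  have tB := mul_le_mul_of_nonneg_left B ht.1
  rw [hγtp] at A
  have key : dist (γ t) (η t) ^ 2 ≤ (t * dist q q') ^ 2 := by nlinarith [A, tB]
  nlinarith [key, h1, h2]

lemma common_end {X : Type*} [MetricSpace X] (hcat : CAT0Ineq X)
    (p p' q' : X) (η σ : ℝ → X)
    (hη0 : η 0 = p) (hη1 : η 1 = q')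
    (hηd : ∀ s ∈ Icc (0:ℝ) 1, ∀ t ∈ Icc (0:ℝ) 1, dist (η s) (η t) = |s - t| * dist p q')
    (hσ0 : σ 0 = p') (hσ1 : σ 1 = q')
    (hσd : ∀ s ∈ Icc (0:ℝ) 1, ∀ t ∈ Icc (0:ℝ) 1, dist (σ s) (σ t) = |s - t| * dist p' q')
    (t : ℝ) (ht : t ∈ Icc (0:ℝ) 1) :
    dist (η t) (σ t) ≤ (1 - t) * dist p p' := by
  have A := hcat p' q' σ hσ0 hσ1 hσd (η t) t ht
  have B := hcat p q' η hη0 hη1 hηd p' t ht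
  have hηtq : dist (η t) q' = (1 - t) * dist p q' := by
    have h := hηd t ht 1 ⟨zero_le_one, le_refl 1⟩
    rw [hη1] at h
    rw [h, abs_of_nonpos (by linarith [ht.2] : t - 1 ≤ 0)]
    ring_nf
  rw [dist_comm p' (η t), dist_comm p' p] at B
  have h1 : (0:ℝ) ≤ dist (η t) (σ t) := dist_nonneg
  have h2 : (0:ℝ) ≤ (1 - t) * dist p p' := mul_nonneg (by linarith [ht.2]) dist_nonneg
  have tB := mul_le_mul_of_nonneg_left B (by linarith [ht.2] : (0:ℝ) ≤ 1 - t)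
  rw [hηtq] at A
  have key : dist (η t) (σ t) ^ 2 ≤ ((1 - t) * dist p p') ^ 2 := by nlinarith [A, tB]
  nlinarith [key, h1, h2]

lemma convIter_empty {X : Type*} [MetricSpace X] (seg : X → X → Set X) :
    ∀ i : ℕ, convIter seg i (∅ : Set X) = ∅ := by
  intro i
  induction i with
  | zero => rfl
  | succ n ih => simp [convIter, ih, conv1]

/-- Lemma `GrowthCont`. If `X` is a CAT(0) space and `Y ⊆ X` is
`ν`-quasiconvex, then `convⁱ(Y) ⊆ N_{iν}(Y)` for every `i ≥ 1`. -/
theorem convIter_subset_nbhd {X : Type*} [MetricSpace X] (seg : X → X → Set X)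
    (hseg : ∀ x y : X, IsGeodSeg (seg x y) x y)
    (huniq : ∀ (x y : X) (S : Set X), IsGeodSeg S x y → S = seg x y)
    (hcat : CAT0Ineq X)
    (ν : ℝ) (Y : Set X)
    (hqc : ∀ x ∈ Y, ∀ y ∈ Y, seg x y ⊆ {z | Metric.infDist z Y < ν}) :
    ∀ i : ℕ, 1 ≤ i → convIter seg i Y ⊆ {z | Metric.infDist z Y < (i : ℝ) * ν} := by
  intro i hi
  induction i, hi using Nat.le_induction with
  | base =>
    intro z hz
    simp only [convIter, conv1, mem_iUnion] at hz
    obtain ⟨x, hx, y, hy, hz⟩ := hz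
    have := hqc x hx y hy hz
    simpa using this
  | succ i hi IH =>
    intro z hz
    rcases Y.eq_empty_or_nonempty with rfl | hY
    · rw [show convIter seg (i+1) (∅ : Set X) = ∅ from convIter_empty seg _] at hz
      exact absurd hz (notMem_empty z)
    simp only [convIter, conv1, mem_iUnion] at hz
    obtain ⟨p, hp, q, hq, hz⟩ := hz
    have hpY : Metric.infDist p Y < (i : ℝ) * ν := IH hp
    have hqY : Metric.infDist q Y < (i : ℝ) * ν := IH hq
    obtain ⟨yp, hyp, hdp⟩ := (Metric.infDist_lt_iff hY).mp hpY
    obtain ⟨yq, hyq, hdq⟩ := (Metric.infDist_lt_iff hY).mp hqY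
    obtain ⟨γ, hγ0, hγ1, hγd, hγS⟩ := hseg p q
    obtain ⟨η, hη0, hη1, hηd, hηS⟩ := hseg p yq
    obtain ⟨σ, hσ0, hσ1, hσd, hσS⟩ := hseg yp yq
    rw [hγS] at hz
    obtain ⟨t, ht, rfl⟩ := hz
    have h1 : dist (γ t) (η t) ≤ t * dist q yq :=
      common_start hcat p q yq γ η hγ0 hγ1 hγd hη0 hη1 hηd t ht
    have h2 : dist (η t) (σ t) ≤ (1 - t) * dist p yp :=
      common_end hcat p yp yq η σ hη0 hη1 hηd hσ0 hσ1 hσd t ht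
    have hσY : Metric.infDist (σ t) Y < ν := by
      have hmem : σ t ∈ seg yp yq := by
        rw [hσS]; exact mem_image_of_mem σ ht
      exact hqc yp hyp yq hyq hmem
    have hiν : (0:ℝ) < (i : ℝ) * ν := lt_of_le_of_lt dist_nonneg hdp
    have hd : dist (γ t) (σ t) < (i : ℝ) * ν := by
      have htri := dist_triangle (γ t) (η t) (σ t)
      have hm1 : dist q yq ≤ max (dist p yp) (dist q yq) := le_max_right _ _
      have hm2 : dist p yp ≤ max (dist p yp) (dist q yq) := le_max_left _ _
      have hle : dist (γ t) (σ t) ≤ max (dist p yp) (dist q yq) := by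
        nlinarith [mul_le_mul_of_nonneg_left hm1 ht.1,
          mul_le_mul_of_nonneg_left hm2 (by linarith [ht.2] : (0:ℝ) ≤ 1 - t)]
      exact lt_of_le_of_lt hle (max_lt hdp hdq)
    have hfin : Metric.infDist (γ t) Y ≤ Metric.infDist (σ t) Y + dist (γ t) (σ t) :=
      Metric.infDist_le_infDist_add_dist
    have : Metric.infDist (γ t) Y < (i : ℝ) * ν + ν := by linarith
    simpa [add_mul] using this.trans_le (by push_cast; ring_nf; exact le_refl _)
end

section
/- Let X be a geodesic metric space, Y ⊆ X, and i a positive integer. If conv^i(S) = conv(S) for every finite subset S ⊆ Y, then conv^i(Y) is convex (and hence equals conv(Y)). -/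
open Set Metric

lemma mem_seg_left {X : Type*} [MetricSpace X] (seg : X → X → Set X)
    (hseg : ∀ x y : X, IsGeodSeg (seg x y) x y) (x y : X) : x ∈ seg x y := by
  obtain ⟨γ, h0, _, _, hS⟩ := hseg x y
  rw [hS]
  exact ⟨0, ⟨le_refl _, zero_le_one⟩, h0⟩

lemma conv1_mono {X : Type*} [MetricSpace X] (seg : X → X → Set X) {A B : Set X}
    (h : A ⊆ B) : conv1 seg A ⊆ conv1 seg B := by
  intro z hz
  simp only [conv1, mem_iUnion] at hz ⊢
  obtain ⟨x, hx, y, hy, hz⟩ := hz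
  exact ⟨x, h hx, y, h hy, hz⟩

lemma convIter_mono {X : Type*} [MetricSpace X] (seg : X → X → Set X) (i : ℕ) {A B : Set X}
    (h : A ⊆ B) : convIter seg i A ⊆ convIter seg i B := by
  induction i with
  | zero => exact h
  | succ n ih => exact conv1_mono seg ih

lemma subset_convIter {X : Type*} [MetricSpace X] (seg : X → X → Set X)
    (hseg : ∀ x y : X, IsGeodSeg (seg x y) x y) (i : ℕ) (A : Set X) :
    A ⊆ convIter seg i A := by
  induction i with
  | zero => exact subset_rfl
  | succ n ih =>
    intro x hx
    simp only [convIter, conv1, mem_iUnion]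
    exact ⟨x, ih hx, x, ih hx, mem_seg_left seg hseg x x⟩

lemma convIter_subset_of_convex {X : Type*} [MetricSpace X] (seg : X → X → Set X)
    (i : ℕ) {A C : Set X} (hAC : A ⊆ C) (hC : SegConvex seg C) :
    convIter seg i A ⊆ C := by
  induction i with
  | zero => exact hAC
  | succ n ih =>
    intro z hz
    simp only [convIter, conv1, mem_iUnion] at hz
    obtain ⟨x, hx, y, hy, hz⟩ := hz
    exact hC x (ih hx) y (ih hy) hz

lemma segConvHull_convex {X : Type*} [MetricSpace X] (seg : X → X → Set X) (Y : Set X) :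
    SegConvex seg (segConvHull seg Y) := by
  intro x hx y hy z hz C hC
  exact hC.1 x (hx C hC) y (hy C hC) hz

lemma subset_segConvHull {X : Type*} [MetricSpace X] (seg : X → X → Set X) (Y : Set X) :
    Y ⊆ segConvHull seg Y := fun x hx C hC => hC.2 hx

lemma exists_finite_of_mem_convIter {X : Type*} [MetricSpace X] (seg : X → X → Set X)
    (i : ℕ) {A : Set X} {z : X} (hz : z ∈ convIter seg i A) :
    ∃ S : Set X, S ⊆ A ∧ S.Finite ∧ z ∈ convIter seg i S := by
  induction i generalizing z with
  | zero =>
    exact ⟨{z}, singleton_subset_iff.2 hz, finite_singleton z, rfl⟩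
  | succ n ih =>
    simp only [convIter, conv1, mem_iUnion] at hz
    obtain ⟨x, hx, y, hy, hz⟩ := hz
    obtain ⟨S₁, hS₁A, hS₁f, hxS₁⟩ := ih hx
    obtain ⟨S₂, hS₂A, hS₂f, hyS₂⟩ := ih hy
    refine ⟨S₁ ∪ S₂, union_subset hS₁A hS₂A, hS₁f.union hS₂f, ?_⟩
    simp only [convIter, conv1, mem_iUnion]
    exact ⟨x, convIter_mono seg n subset_union_left hxS₁,
      y, convIter_mono seg n subset_union_right hyS₂, hz⟩

/-- Lemma `FinSet`. Let `X` be a geodesic metric space, `Y ⊆ X`, and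
`i` a positive integer. If `convⁱ(S) = conv(S)` for every finite subset `S ⊆ Y`, then
`convⁱ(Y)` is convex, hence equals `conv(Y)`. -/
theorem convIter_convex_of_finite {X : Type*} [MetricSpace X] (seg : X → X → Set X)
    (hseg : ∀ x y : X, IsGeodSeg (seg x y) x y)
    (Y : Set X) (i : ℕ) (hi : 0 < i)
    (hfin : ∀ S : Set X, S ⊆ Y → S.Finite → convIter seg i S = segConvHull seg S) :
    SegConvex seg (convIter seg i Y) ∧ convIter seg i Y = segConvHull seg Y := by
  have hconv : SegConvex seg (convIter seg i Y) := by
    intro x hx y hy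
    obtain ⟨S₁, hS₁Y, hS₁f, hxS₁⟩ := exists_finite_of_mem_convIter seg i hx
    obtain ⟨S₂, hS₂Y, hS₂f, hyS₂⟩ := exists_finite_of_mem_convIter seg i hy
    have hSY : S₁ ∪ S₂ ⊆ Y := union_subset hS₁Y hS₂Y
    have hSf : (S₁ ∪ S₂).Finite := hS₁f.union hS₂f
    have hx' : x ∈ convIter seg i (S₁ ∪ S₂) :=
      convIter_mono seg i subset_union_left hxS₁
    have hy' : y ∈ convIter seg i (S₁ ∪ S₂) :=
      convIter_mono seg i subset_union_right hyS₂
    rw [hfin _ hSY hSf] at hx' hy'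
    have : seg x y ⊆ segConvHull seg (S₁ ∪ S₂) :=
      segConvHull_convex seg _ x hx' y hy'
    calc seg x y ⊆ segConvHull seg (S₁ ∪ S₂) := this
      _ = convIter seg i (S₁ ∪ S₂) := (hfin _ hSY hSf).symm
      _ ⊆ convIter seg i Y := convIter_mono seg i hSY
  refine ⟨hconv, subset_antisymm ?_ ?_⟩
  · exact convIter_subset_of_convex seg i (subset_segConvHull seg Y)
      (segConvHull_convex seg Y)
  · intro z hz
    exact hz _ ⟨hconv, subset_convIter seg hseg i Y⟩
end

section
/- Let X be a CAT(0) space. If C ⊆ X is compact, connected and locally convex, then C is convex. -/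
open Set Metric

/-- `C` is locally convex: every point of `C` has a convex neighborhood `U` in `X`
such that `U ∩ C` is convex. -/
def LocallyConvexIn {X : Type*} [MetricSpace X] (seg : X → X → Set X) (C : Set X) : Prop :=
  ∀ x ∈ C, ∃ U ∈ nhds x, SegConvex seg U ∧ SegConvex seg (U ∩ C)


section Helpers

variable {X : Type*} [MetricSpace X]

/-- Speed property abbreviation. -/
def IsGeodParam (γ : ℝ → X) (x y : X) : Prop :=
  γ 0 = x ∧ γ 1 = y ∧
    (∀ s ∈ Set.Icc (0:ℝ) 1, ∀ t ∈ Set.Icc (0:ℝ) 1,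
      dist (γ s) (γ t) = |s - t| * dist x y)

theorem exists_param (seg : X → X → Set X)
    (hseg : ∀ x y : X, IsGeodSeg (seg x y) x y) (x y : X) :
    ∃ γ : ℝ → X, IsGeodParam γ x y ∧ seg x y = γ '' Set.Icc 0 1 := by
  obtain ⟨γ, h0, h1, hsp, him⟩ := hseg x y
  exact ⟨γ, ⟨h0, h1, hsp⟩, him⟩

theorem param_dist_left {γ : ℝ → X} {x y : X} (h : IsGeodParam γ x y)
    {t : ℝ} (ht : t ∈ Set.Icc (0:ℝ) 1) : dist x (γ t) = t * dist x y := by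
  obtain ⟨h0, h1, hsp⟩ := h
  have := hsp 0 ⟨le_refl _, zero_le_one⟩ t ht
  rw [h0] at this
  rw [this, abs_of_nonpos (by linarith [ht.1])]
  ring

theorem param_dist_right {γ : ℝ → X} {x y : X} (h : IsGeodParam γ x y)
    {t : ℝ} (ht : t ∈ Set.Icc (0:ℝ) 1) : dist (γ t) y = (1 - t) * dist x y := by
  obtain ⟨h0, h1, hsp⟩ := h
  have := hsp t ht 1 ⟨zero_le_one, le_refl _⟩
  rw [h1] at this
  rw [this, abs_of_nonpos (by linarith [ht.2])]
  ring

theorem left_mem_seg (seg : X → X → Set X)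
    (hseg : ∀ x y : X, IsGeodSeg (seg x y) x y) (x y : X) : x ∈ seg x y := by
  obtain ⟨γ, ⟨h0, h1, hsp⟩, him⟩ := exists_param seg hseg x y
  rw [him]
  exact ⟨0, ⟨le_refl _, zero_le_one⟩, h0⟩

theorem right_mem_seg (seg : X → X → Set X)
    (hseg : ∀ x y : X, IsGeodSeg (seg x y) x y) (x y : X) : y ∈ seg x y := by
  obtain ⟨γ, ⟨h0, h1, hsp⟩, him⟩ := exists_param seg hseg x y
  rw [him]
  exact ⟨1, ⟨zero_le_one, le_refl _⟩, h1⟩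

/-- Concatenation of two geodesic parametrizations through an aligned point. -/
theorem concat_param (seg : X → X → Set X)
    (hseg : ∀ x y : X, IsGeodSeg (seg x y) x y)
    {p q r : X} (hadd : dist p q + dist q r = dist p r)
    (h1 : 0 < dist p q) (h2 : 0 < dist q r) :
    ∃ γ : ℝ → X, IsGeodParam γ p r ∧ γ (dist p q / dist p r) = q := by
  have hD0 : 0 < dist p r := by rw [← hadd]; positivity
  set D := dist p r with hD
  set θ := dist p q / D with hθ
  have hθ0 : 0 < θ := div_pos h1 hD0
  have hθ1 : θ < 1 := by
    rw [hθ, div_lt_one hD0]; linarith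
  have hpq : dist p q = θ * D := by rw [hθ]; field_simp
  have hqr : dist q r = (1 - θ) * D := by
    have h : dist q r = D - dist p q := by linarith
    rw [h, hpq]; ring
  obtain ⟨γ1, hγ1, -⟩ := exists_param seg hseg p q
  obtain ⟨γ2, hγ2, -⟩ := exists_param seg hseg q r
  refine ⟨fun t => if t ≤ θ then γ1 (t / θ) else γ2 ((t - θ) / (1 - θ)), ⟨?_, ?_, ?_⟩, ?_⟩
  · show (if (0:ℝ) ≤ θ then γ1 (0 / θ) else γ2 ((0 - θ) / (1 - θ))) = p
    rw [if_pos hθ0.le, zero_div, hγ1.1]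
  · show (if (1:ℝ) ≤ θ then γ1 (1 / θ) else γ2 ((1 - θ) / (1 - θ))) = r
    rw [if_neg (by linarith), div_self (by linarith), hγ2.2.1]
  · -- speed
    have key : ∀ s ∈ Set.Icc (0:ℝ) 1, ∀ t ∈ Set.Icc (0:ℝ) 1, s ≤ t →
        dist ((fun t => if t ≤ θ then γ1 (t / θ) else γ2 ((t - θ) / (1 - θ))) s)
          ((fun t => if t ≤ θ then γ1 (t / θ) else γ2 ((t - θ) / (1 - θ))) t)
          = (t - s) * D := by
      intro s hs t ht hst
      show dist (if s ≤ θ then γ1 (s / θ) else γ2 ((s - θ) / (1 - θ)))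
          (if t ≤ θ then γ1 (t / θ) else γ2 ((t - θ) / (1 - θ))) = (t - s) * D
      by_cases htθ : t ≤ θ
      · have hsθ : s ≤ θ := hst.trans htθ
        rw [if_pos hsθ, if_pos htθ]
        rw [hγ1.2.2 (s/θ) ⟨div_nonneg hs.1 hθ0.le, (div_le_one hθ0).2 hsθ⟩
            (t/θ) ⟨div_nonneg ht.1 hθ0.le, (div_le_one hθ0).2 htθ⟩]
        rw [abs_of_nonpos (by apply sub_nonpos.2; gcongr), hpq]
        field_simp
        ring
      · by_cases hsθ : s ≤ θ
        · -- mixed case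
          rw [if_pos hsθ, if_neg htθ]
          push_neg at htθ
          have hu : (t - θ) / (1 - θ) ∈ Set.Icc (0:ℝ) 1 :=
            ⟨div_nonneg (by linarith) (by linarith),
             (div_le_one (by linarith)).2 (by linarith [ht.2])⟩
          have hsmem : s / θ ∈ Set.Icc (0:ℝ) 1 :=
            ⟨div_nonneg hs.1 hθ0.le, (div_le_one hθ0).2 hsθ⟩
          have h1θ : (1:ℝ) - θ ≠ 0 := by linarith
          have e1 : dist (γ1 (s/θ)) q = (θ - s) * D := by
            rw [param_dist_right hγ1 hsmem, hpq]
            field_simp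
          have e2 : dist q (γ2 ((t - θ)/(1 - θ))) = (t - θ) * D := by
            rw [param_dist_left hγ2 hu, hqr]
            field_simp
          have e3 : dist p (γ1 (s/θ)) = s * D := by
            rw [param_dist_left hγ1 hsmem, hpq]
            field_simp
          have e4 : dist (γ2 ((t - θ)/(1 - θ))) r = (1 - t) * D := by
            rw [param_dist_right hγ2 hu, hqr]
            field_simp
            ring
          have hub : dist (γ1 (s/θ)) (γ2 ((t - θ)/(1 - θ))) ≤ (t - s) * D := by
            calc dist (γ1 (s/θ)) (γ2 ((t - θ)/(1 - θ)))
                ≤ dist (γ1 (s/θ)) q + dist q (γ2 ((t - θ)/(1 - θ))) := dist_triangle _ _ _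
              _ = (t - s) * D := by rw [e1, e2]; ring
          have hlb : (t - s) * D ≤ dist (γ1 (s/θ)) (γ2 ((t - θ)/(1 - θ))) := by
            have htri : D ≤ dist p (γ1 (s/θ)) + dist (γ1 (s/θ)) (γ2 ((t - θ)/(1 - θ)))
                + dist (γ2 ((t - θ)/(1 - θ))) r := by
              calc D = dist p r := hD
                _ ≤ dist p (γ2 ((t - θ)/(1 - θ))) + dist (γ2 ((t - θ)/(1 - θ))) r :=
                    dist_triangle _ _ _
                _ ≤ (dist p (γ1 (s/θ)) + dist (γ1 (s/θ)) (γ2 ((t - θ)/(1 - θ))))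
                    + dist (γ2 ((t - θ)/(1 - θ))) r := by
                    gcongr
                    exact dist_triangle _ _ _
            rw [e3, e4] at htri
            linarith
          linarith
        · push_neg at hsθ
          rw [if_neg (by push_neg; exact hsθ), if_neg htθ]
          push_neg at htθ
          rw [hγ2.2.2 ((s - θ)/(1 - θ))
              ⟨div_nonneg (by linarith) (by linarith),
               (div_le_one (by linarith)).2 (by linarith [hs.2])⟩
              ((t - θ)/(1 - θ))
              ⟨div_nonneg (by linarith) (by linarith),
               (div_le_one (by linarith)).2 (by linarith [ht.2])⟩]
          rw [abs_of_nonpos (by apply sub_nonpos.2; gcongr <;> linarith), hqr]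
          have h1θ : (1:ℝ) - θ ≠ 0 := by linarith
          field_simp
          ring
    intro s hs t ht
    rcases le_total s t with h | h
    · rw [key s hs t ht h, abs_of_nonpos (by linarith)]; ring
    · rw [dist_comm, key t ht s hs h, abs_of_nonneg (by linarith)]
  · show (if θ ≤ θ then γ1 (θ / θ) else γ2 ((θ - θ) / (1 - θ))) = q
    simp only [le_refl, if_true, div_self (ne_of_gt hθ0)]
    exact hγ1.2.1

/-- If distances are additive, the middle point lies on the segment. -/
theorem between_mem_seg (seg : X → X → Set X)
    (hseg : ∀ x y : X, IsGeodSeg (seg x y) x y)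
    (huniq : ∀ (x y : X) (S : Set X), IsGeodSeg S x y → S = seg x y)
    {p q r : X} (hadd : dist p q + dist q r = dist p r) : q ∈ seg p r := by
  rcases eq_or_lt_of_le (dist_nonneg (x := p) (y := q)) with h1 | h1
  · have : q = p := by rw [← dist_eq_zero, dist_comm]; exact h1.symm
    rw [this]; exact left_mem_seg seg hseg p r
  rcases eq_or_lt_of_le (dist_nonneg (x := q) (y := r)) with h2 | h2
  · have : q = r := by rw [← dist_eq_zero]; exact h2.symm
    rw [this]; exact right_mem_seg seg hseg p r
  obtain ⟨γ, hγ, hq⟩ := concat_param seg hseg hadd h1 h2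
  have him : IsGeodSeg (γ '' Set.Icc 0 1) p r := ⟨γ, hγ.1, hγ.2.1, hγ.2.2, rfl⟩
  have hseg' := huniq p r _ him
  rw [← hseg']
  have hD0 : 0 < dist p r := by rw [← hadd]; positivity
  refine ⟨dist p q / dist p r, ⟨by positivity, ?_⟩, hq⟩
  rw [div_le_one hD0]; linarith

/-- The CAT(0) inequality applied at the midpoint of an aligned triple. -/
theorem triple_ineq (seg : X → X → Set X)
    (hseg : ∀ x y : X, IsGeodSeg (seg x y) x y) (hcat : CAT0Ineq X)
    {g : ℝ} (hg : 0 < g) {p q r : X} (h1 : dist p q = g) (h2 : dist q r = g)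
    (h3 : dist p r = 2 * g) (w : X) :
    dist w q ^ 2 ≤ (1/2) * dist w p ^ 2 + (1/2) * dist w r ^ 2 - g ^ 2 := by
  have hadd : dist p q + dist q r = dist p r := by rw [h1, h2, h3]; ring
  obtain ⟨γ, hγ, hq⟩ := concat_param seg hseg hadd (by linarith) (by linarith)
  have hθ : dist p q / dist p r = 1/2 := by rw [h1, h3]; field_simp
  rw [hθ] at hq
  have := hcat p r γ hγ.1 hγ.2.1 hγ.2.2 w (1/2) ⟨by norm_num, by norm_num⟩
  rw [hq, h3] at this
  nlinarith [this]

/-- Uniform local convexity radius from compactness. -/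
theorem uniform_eps (seg : X → X → Set X)
    {C : Set X} (hcomp : IsCompact C) (hloc : LocallyConvexIn seg C) :
    ∃ ε > 0, ∀ p ∈ C, ∀ q ∈ C, dist p q < ε → seg p q ⊆ C := by
  rcases C.eq_empty_or_nonempty with hC | hC
  · exact ⟨1, one_pos, by simp [hC]⟩
  have H : ∀ x ∈ C, ∃ r > 0, ∀ p ∈ C, ∀ q ∈ C, dist x p < r → dist p q < r →
      seg p q ⊆ C := by
    intro x hx
    obtain ⟨U, hU, hUconv, hUCconv⟩ := hloc x hx
    obtain ⟨δ, hδ0, hδ⟩ := Metric.mem_nhds_iff.1 hU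
    refine ⟨δ/3, by positivity, fun p hp q hq hxp hpq => ?_⟩
    have hpU : p ∈ U := hδ (by rw [mem_ball, dist_comm]; linarith)
    have hqU : q ∈ U := hδ (by
      rw [mem_ball]
      have := dist_triangle q p x
      rw [dist_comm p x] at this
      rw [dist_comm q p] at this
      linarith)
    exact fun z hz => (hUCconv p ⟨hpU, hp⟩ q ⟨hqU, hq⟩ hz).2
  choose! r hr0 hrP using H
  obtain ⟨t, ht⟩ := hcomp.elim_nhds_subcover' (fun x _ => ball x (r x / 2))
    (fun x hx => ball_mem_nhds x (by have := hr0 x hx; positivity))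
  have htne : t.Nonempty := by
    obtain ⟨c, hc⟩ := hC
    obtain ⟨x, hx, -⟩ := Set.mem_iUnion₂.1 (ht hc)
    exact ⟨x, hx⟩
  refine ⟨t.inf' htne (fun x => r x / 2), ?_, ?_⟩
  · rw [gt_iff_lt, Finset.lt_inf'_iff]
    intro x hx
    have := hr0 x x.2
    positivity
  · intro p hp q hq hpq
    obtain ⟨x, hxt, hpx⟩ := Set.mem_iUnion₂.1 (ht hp)
    have hεle : t.inf' htne (fun x => r x / 2) ≤ r x / 2 := Finset.inf'_le _ hxt
    have h1 : dist (x:X) p < r x := by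
      rw [mem_ball, dist_comm] at hpx
      have := hr0 x x.2
      linarith
    exact hrP x x.2 p hp q hq h1 (by have := hr0 x x.2; linarith)

/-- Preconnected sets are η-chain connected. -/
theorem chain_exists {C : Set X} (hconn : IsPreconnected C) {η : ℝ} (hη : 0 < η)
    {a b : X} (ha : a ∈ C) (hb : b ∈ C) :
    ∃ N : ℕ, ∃ c : ℕ → X, c 0 = a ∧ c N = b ∧ (∀ i, c i ∈ C) ∧
      ∀ i < N, dist (c i) (c (i+1)) ≤ η := by
  set R : Set X := {y | y ∈ C ∧ ∃ N : ℕ, ∃ c : ℕ → X, c 0 = a ∧ c N = y ∧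
    (∀ i, c i ∈ C) ∧ ∀ i < N, dist (c i) (c (i+1)) ≤ η} with hR
  have haR : a ∈ R := ⟨ha, 0, fun _ => a, rfl, rfl, fun _ => ha, by omega⟩
  have append : ∀ y ∈ R, ∀ z ∈ C, dist y z ≤ η → z ∈ R := by
    rintro y ⟨hyC, N, c, h0, hN, hC', hgap⟩ z hzC hyz
    refine ⟨hzC, N+1, fun i => if i ≤ N then c i else z, ?_, ?_, ?_, ?_⟩
    · show (if 0 ≤ N then c 0 else z) = a
      rw [if_pos (Nat.zero_le N)]; exact h0
    · show (if N+1 ≤ N then c (N+1) else z) = z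
      rw [if_neg (by omega)]
    · intro i
      show (if i ≤ N then c i else z) ∈ C
      by_cases h : i ≤ N
      · rw [if_pos h]; exact hC' i
      · rw [if_neg h]; exact hzC
    · intro i hi
      show dist (if i ≤ N then c i else z) (if i+1 ≤ N then c (i+1) else z) ≤ η
      by_cases h : i < N
      · rw [if_pos (by omega), if_pos (by omega)]
        exact hgap i h
      · have hiN : i = N := by omega
        subst hiN
        rw [if_pos (le_refl i), if_neg (by omega), hN]
        exact hyz
  by_contra hcon
  have hbR : b ∉ R := by
    intro hbR
    obtain ⟨-, N, c, h0, hN, hC', hgap⟩ := hbR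
    exact hcon ⟨N, c, h0, hN, hC', hgap⟩
  set u : Set X := ⋃ x ∈ R, ball x η with hu
  set v : Set X := ⋃ x ∈ C \ R, ball x η with hv
  have hou : IsOpen u := isOpen_biUnion fun _ _ => isOpen_ball
  have hov : IsOpen v := isOpen_biUnion fun _ _ => isOpen_ball
  have hCuv : C ⊆ u ∪ v := by
    intro y hy
    by_cases hyR : y ∈ R
    · exact Or.inl (Set.mem_biUnion hyR (mem_ball_self hη))
    · exact Or.inr (Set.mem_biUnion ⟨hy, hyR⟩ (mem_ball_self hη))
  have h1 : (C ∩ u).Nonempty := ⟨a, ha, Set.mem_biUnion haR (mem_ball_self hη)⟩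
  have h2 : (C ∩ v).Nonempty := ⟨b, hb, Set.mem_biUnion ⟨hb, hbR⟩ (mem_ball_self hη)⟩
  obtain ⟨z, hzC, hzu, hzv⟩ := hconn u v hou hov hCuv h1 h2
  obtain ⟨x, hxR, hzx⟩ := Set.mem_iUnion₂.1 hzu
  obtain ⟨y, hyCR, hzy⟩ := Set.mem_iUnion₂.1 hzv
  have hzR : z ∈ R := append x hxR z hzC (by rw [mem_ball, dist_comm] at hzx; linarith)
  have hyR : y ∈ R := append z hzR y hyCR.1 (by rw [mem_ball] at hzy; linarith)
  exact hyCR.2 hyR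

set_option maxHeartbeats 2000000 in
/-- Main auxiliary: existence of an `ε/3`-chain forces the segment into `C`. -/
theorem seg_subset_of_chain (seg : X → X → Set X)
    (hseg : ∀ x y : X, IsGeodSeg (seg x y) x y)
    (huniq : ∀ (x y : X) (S : Set X), IsGeodSeg S x y → S = seg x y)
    (hcat : CAT0Ineq X)
    {C : Set X} (hcomp : IsCompact C)
    {ε : ℝ} (hε : 0 < ε)
    (hshort : ∀ p ∈ C, ∀ q ∈ C, dist p q < ε → seg p q ⊆ C)
    {a b : X} (hab : a ≠ b)
    {N : ℕ} {c : ℕ → X} (hc0 : c 0 = a) (hcN : c N = b) (hcC : ∀ i, c i ∈ C)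
    (hcgap : ∀ i < N, dist (c i) (c (i+1)) ≤ ε/3) :
    seg a b ⊆ C := by
  classical
  set K : Set (ℕ → X) := {f | f 0 = a ∧ f N = b ∧ (∀ i, f i ∈ C) ∧
    ∀ i < N, dist (f i) (f (i+1)) ≤ ε/3} with hK
  have hcK : c ∈ K := ⟨hc0, hcN, hcC, hcgap⟩
  have hKcl : IsClosed K := by
    have h1 : IsClosed {f : ℕ → X | f 0 = a} :=
      isClosed_singleton.preimage (continuous_apply 0)
    have h2 : IsClosed {f : ℕ → X | f N = b} :=
      isClosed_singleton.preimage (continuous_apply N)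
    have h3 : IsClosed {f : ℕ → X | ∀ i, f i ∈ C} := by
      have : {f : ℕ → X | ∀ i, f i ∈ C} = ⋂ i, (fun f : ℕ → X => f i) ⁻¹' C := by
        ext f; simp
      rw [this]
      exact isClosed_iInter fun i => hcomp.isClosed.preimage (continuous_apply i)
    have h4 : IsClosed {f : ℕ → X | ∀ i < N, dist (f i) (f (i+1)) ≤ ε/3} := by
      have : {f : ℕ → X | ∀ i < N, dist (f i) (f (i+1)) ≤ ε/3}
          = ⋂ i, ⋂ (_ : i < N), {f : ℕ → X | dist (f i) (f (i+1)) ≤ ε/3} := by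
        ext f; simp
      rw [this]
      refine isClosed_iInter fun i => isClosed_iInter fun _ => ?_
      exact isClosed_le ((continuous_apply i).dist (continuous_apply (i+1))) continuous_const
    have : K = ({f : ℕ → X | f 0 = a} ∩ {f : ℕ → X | f N = b}) ∩
        ({f : ℕ → X | ∀ i, f i ∈ C} ∩ {f : ℕ → X | ∀ i < N, dist (f i) (f (i+1)) ≤ ε/3}) := by
      ext f; simp only [hK, Set.mem_setOf_eq, Set.mem_inter_iff]; tauto
    rw [this]
    exact ((h1.inter h2).inter (h3.inter h4))
  have hKcomp : IsCompact K := by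
    refine IsCompact.of_isClosed_subset (isCompact_univ_pi fun _ : ℕ => hcomp) hKcl ?_
    intro f hf
    rw [Set.mem_univ_pi]
    exact fun i => hf.2.2.1 i
  set E : (ℕ → X) → ℝ := fun f => ∑ i ∈ Finset.range N, dist (f i) (f (i+1))^2 with hE
  have hEcont : Continuous E :=
    continuous_finset_sum _ fun i _ => ((continuous_apply i).dist (continuous_apply (i+1))).pow 2
  obtain ⟨f, hfK, hfmin⟩ := hKcomp.exists_isMinOn ⟨c, hcK⟩ hEcont.continuousOn
  have hmin : ∀ g ∈ K, E f ≤ E g := fun g hg => hfmin hg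
  obtain ⟨hf0, hfN, hfC, hfgap⟩ := hfK
  -- midpoint property at interior indices
  have Q : ∀ i, i + 2 ≤ N → dist (f i) (f (i+1)) = dist (f (i+1)) (f (i+2)) ∧
      dist (f i) (f (i+2)) = 2 * dist (f i) (f (i+1)) := by
    intro i hi
    have hxη : dist (f i) (f (i+1)) ≤ ε/3 := hfgap i (by omega)
    have hyη : dist (f (i+1)) (f (i+2)) ≤ ε/3 := hfgap (i+1) (by omega)
    have hDxy : dist (f i) (f (i+2)) ≤ dist (f i) (f (i+1)) + dist (f (i+1)) (f (i+2)) :=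
      dist_triangle _ _ _
    obtain ⟨γ, hγ, him⟩ := exists_param seg hseg (f i) (f (i+2))
    have hhalf : (1:ℝ)/2 ∈ Set.Icc (0:ℝ) 1 := ⟨by norm_num, by norm_num⟩
    have hm_seg : γ (1/2) ∈ seg (f i) (f (i+2)) := by
      rw [him]; exact ⟨1/2, hhalf, rfl⟩
    have hmC : γ (1/2) ∈ C :=
      hshort (f i) (hfC i) (f (i+2)) (hfC (i+2)) (by linarith) hm_seg
    have hd1 : dist (f i) (γ (1/2)) = (1/2) * dist (f i) (f (i+2)) :=
      param_dist_left hγ hhalf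
    have hd2 : dist (γ (1/2)) (f (i+2)) = (1/2) * dist (f i) (f (i+2)) := by
      rw [param_dist_right hγ hhalf]; norm_num
    set m := γ (1/2)
    set g' := Function.update f (i+1) m with hg'
    have hg'eq : ∀ j, j ≠ i+1 → g' j = f j := by
      intro j hj; rw [hg']; exact Function.update_of_ne hj _ _
    have hg'i1 : g' (i+1) = m := Function.update_self _ _ _
    have hg'K : g' ∈ K := by
      refine ⟨?_, ?_, ?_, ?_⟩
      · rw [hg'eq 0 (by omega)]; exact hf0
      · rw [hg'eq N (by omega)]; exact hfN
      · intro j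
        by_cases hj : j = i+1
        · rw [hj, hg'i1]; exact hmC
        · rw [hg'eq j hj]; exact hfC j
      · intro j hjN
        by_cases hj1 : j = i
        · rw [hj1, hg'eq i (by omega), hg'i1, hd1]; linarith
        · by_cases hj2 : j = i+1
          · rw [hj2, hg'i1, hg'eq (i+2) (by omega), hd2]; linarith
          · rw [hg'eq j hj2, hg'eq (j+1) (by omega)]
            exact hfgap j hjN
    -- energy comparison
    have hiR : i ∈ Finset.range N := Finset.mem_range.2 (by omega)
    have hi1R : i + 1 ∈ (Finset.range N).erase i :=
      Finset.mem_erase.2 ⟨by omega, Finset.mem_range.2 (by omega)⟩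
    have hsplit : ∀ h : ℕ → X, (∑ j ∈ Finset.range N, dist (h j) (h (j+1))^2)
        = dist (h i) (h (i+1))^2 + (dist (h (i+1)) (h (i+2))^2
          + ∑ j ∈ ((Finset.range N).erase i).erase (i+1), dist (h j) (h (j+1))^2) := by
      intro h
      rw [← Finset.add_sum_erase _ _ hiR, ← Finset.add_sum_erase _ _ hi1R]
    have htail : (∑ j ∈ ((Finset.range N).erase i).erase (i+1), dist (g' j) (g' (j+1))^2)
        = ∑ j ∈ ((Finset.range N).erase i).erase (i+1), dist (f j) (f (j+1))^2 := by
      refine Finset.sum_congr rfl fun j hj => ?_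
      have hj1 : j ≠ i + 1 := (Finset.mem_erase.1 hj).1
      have hj2 : j ≠ i := (Finset.mem_erase.1 (Finset.mem_erase.1 hj).2).1
      rw [hg'eq j hj1, hg'eq (j+1) (by omega)]
    have hEineq := hmin g' hg'K
    rw [hE] at hEineq
    simp only at hEineq
    rw [hsplit f, hsplit g', htail, hg'eq i (by omega), hg'i1,
      hg'eq (i+2) (by omega), hd1, hd2] at hEineq
    -- now: x^2 + y^2 ≤ 2 * ((1/2) D)^2 with D ≤ x + y
    have hkey : dist (f i) (f (i+1))^2 + dist (f (i+1)) (f (i+2))^2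
        ≤ (1/2) * dist (f i) (f (i+2))^2 := by nlinarith [hEineq]
    have hxy : dist (f i) (f (i+1)) = dist (f (i+1)) (f (i+2)) := by
      have hsq : (dist (f i) (f (i+1)) - dist (f (i+1)) (f (i+2)))^2 ≤ 0 := by
        nlinarith [hkey, hDxy, dist_nonneg (x := f i) (y := f (i+2))]
      have := le_antisymm hsq (sq_nonneg _)
      have := pow_eq_zero_iff (n := 2) (by norm_num) |>.1 this
      linarith
    refine ⟨hxy, ?_⟩
    have hge : 2 * dist (f i) (f (i+1)) ≤ dist (f i) (f (i+2)) := by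
      nlinarith [hkey, hxy, dist_nonneg (x := f i) (y := f (i+2)),
        dist_nonneg (x := f i) (y := f (i+1))]
    rw [hxy] at hDxy ⊢
    linarith [hxy ▸ hDxy]
  -- all gaps are equal
  have gapeq : ∀ i < N, dist (f i) (f (i+1)) = dist (f 0) (f 1) := by
    intro i
    induction i with
    | zero => intro _; rfl
    | succ n ih =>
      intro hn
      rw [← (Q n (by omega)).1]
      exact ih (by omega)
  set g := dist (f 0) (f 1) with hgdef
  have hgnn : 0 ≤ g := dist_nonneg
  -- chain upper bounds
  have hub : ∀ k m : ℕ, k + m ≤ N → dist (f k) (f (k+m)) ≤ (m:ℝ) * g := by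
    intro k m
    induction m with
    | zero => intro _; simp
    | succ n ih =>
      intro h
      have h1 : dist (f k) (f (k+(n+1))) ≤ dist (f k) (f (k+n)) + dist (f (k+n)) (f (k+n+1)) := by
        have he : k+(n+1) = (k+n)+1 := by omega
        rw [he]
        exact dist_triangle _ _ _
      have h2 : dist (f (k+n)) (f (k+n+1)) = g := gapeq (k+n) (by omega)
      have h3 := ih (by omega)
      push_cast
      push_cast at h3
      linarith
  -- positivity of the gap
  have hg0 : 0 < g := by
    rcases eq_or_lt_of_le hgnn with h | h
    · exfalso
      have h1 := hub 0 N (by omega)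
      rw [zero_add, ← h] at h1
      simp only [mul_zero] at h1
      have h2 : dist (f 0) (f N) = 0 := le_antisymm h1 dist_nonneg
      exact hab (by rw [← hf0, ← hfN]; exact dist_eq_zero.1 h2)
    · exact h
  -- exact distances from the start, by the CAT(0) induction
  have exact_dist : ∀ k, k ≤ N → dist (f 0) (f k) = (k:ℝ) * g := by
    intro k
    induction k using Nat.twoStepInduction with
    | zero => intro _; simp
    | one => intro _; rw [hgdef]; push_cast; ring
    | more n ih1 ih2 =>
      intro h
      have e0 : dist (f 0) (f n) = (n:ℝ)*g := ih1 (by omega)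
      have e1 : dist (f 0) (f (n+1)) = ((n:ℝ)+1)*g := by
        rw [ih2 (by omega)]; push_cast; ring
      have hq := Q n (by omega)
      have t1 : dist (f n) (f (n+1)) = g := gapeq n (by omega)
      have t2 : dist (f (n+1)) (f (n+2)) = g := gapeq (n+1) (by omega)
      have t3 : dist (f n) (f (n+2)) = 2*g := by rw [hq.2, t1]
      have hineq := triple_ineq seg hseg hcat hg0 t1 t2 t3 (f 0)
      rw [e0, e1] at hineq
      have hup : dist (f 0) (f (n+2)) ≤ ((n:ℝ)+2)*g := by
        have := dist_triangle (f 0) (f (n+1)) (f (n+2))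
        rw [e1, t2] at this
        linarith
      have hsum : (0:ℝ) < ((n:ℝ)+2)*g + dist (f 0) (f (n+2)) := by
        have := dist_nonneg (x := f 0) (y := f (n+2))
        have : (0:ℝ) < ((n:ℝ)+2)*g := by positivity
        linarith [dist_nonneg (x := f 0) (y := f (n+2))]
      have hlow : ((n:ℝ)+2)*g ≤ dist (f 0) (f (n+2)) := by
        nlinarith [hineq, hsum, dist_nonneg (x := f 0) (y := f (n+2))]
      push_cast
      linarith
  have hN1 : 1 ≤ N := by
    rcases Nat.eq_zero_or_pos N with h | h
    · exfalso; exact hab (by rw [← hf0, ← hfN, h])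
    · exact h
  have hdN : dist a b = (N:ℝ) * g := by
    rw [← hf0, ← hfN]; exact exact_dist N le_rfl
  have hd0 : 0 < dist a b := dist_pos.2 hab
  -- exact distances to the end
  have exact_right : ∀ k, k ≤ N → dist (f k) (f N) = ((N:ℝ) - (k:ℝ)) * g := by
    intro k hk
    have h1 : dist (f k) (f N) ≤ ((N:ℝ) - (k:ℝ))*g := by
      have := hub k (N - k) (by omega)
      rw [Nat.add_sub_cancel' hk] at this
      rw [Nat.cast_sub hk] at this
      exact this
    have h2 := dist_triangle (f 0) (f k) (f N)
    rw [exact_dist k hk, ← hf0, ← hfN] at *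
    rw [hdN] at h2
    linarith
  -- chain points lie on the segment
  have fk_mem : ∀ k, k ≤ N → f k ∈ seg a b := by
    intro k hk
    rw [← hf0, ← hfN]
    apply between_mem_seg seg hseg huniq
    rw [exact_dist k hk, exact_right k hk]
    rw [← hf0, ← hfN] at hdN
    rw [hdN]
    ring
  -- final: every point of the segment lies in a short sub-segment
  obtain ⟨γ, hγ, him⟩ := exists_param seg hseg a b
  intro z hz
  rw [him] at hz
  obtain ⟨t, ht, rfl⟩ := hz
  set k := min (⌊t * N⌋₊) (N - 1) with hk
  have hkN : k ≤ N - 1 := min_le_right _ _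
  have hk1N : k + 1 ≤ N := by omega
  have hNpos : (0:ℝ) < N := by exact_mod_cast hN1
  have htN0 : 0 ≤ t * N := mul_nonneg ht.1 hNpos.le
  have hbound : (k:ℝ)/N ≤ t ∧ t ≤ ((k:ℝ)+1)/N := by
    by_cases hc : ⌊t * N⌋₊ ≤ N - 1
    · have hke : k = ⌊t * N⌋₊ := min_eq_left hc
      constructor
      · rw [hke, div_le_iff₀ hNpos]
        exact (Nat.floor_le htN0).trans (by rw [mul_comm])|>.trans_eq rfl
      · rw [hke, le_div_iff₀ hNpos]
        have := (Nat.lt_floor_add_one (t * N)).le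
        linarith [Nat.lt_floor_add_one (t * N)]
    · have hke : k = N - 1 := min_eq_right (by omega)
      push_neg at hc
      have hNf : N ≤ ⌊t * N⌋₊ := by omega
      have h1 : (N:ℝ) ≤ t * N := by
        have := (Nat.le_floor_iff htN0).1 hNf
        linarith
      have ht1 : t = 1 := le_antisymm ht.2 (by nlinarith [h1, hNpos])
      have hkr : (k:ℝ) = (N:ℝ) - 1 := by
        rw [hke, Nat.cast_sub hN1]
        norm_num
      have hNN : ((N:ℝ) - 1 + 1)/(N:ℝ) = 1 := by field_simp; ring
      constructor
      · rw [hkr, ht1, div_le_one hNpos]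
        linarith
      · rw [hkr, ht1, hNN]
  have hmemk : (k:ℝ)/N ∈ Set.Icc (0:ℝ) 1 := by
    constructor
    · positivity
    · rw [div_le_one hNpos]
      exact_mod_cast Nat.cast_le.2 (by omega : k ≤ N)
  have hmemk1 : ((k:ℝ)+1)/N ∈ Set.Icc (0:ℝ) 1 := by
    constructor
    · positivity
    · rw [div_le_one hNpos]
      push_cast
      exact_mod_cast (by exact_mod_cast Nat.cast_le.2 hk1N : ((k:ℝ)+1) ≤ (N:ℝ))
  have hgval : g = dist a b / N := by
    rw [hdN]; field_simp
  have hfkγ : ∀ j, j ≤ N → f j = γ ((j:ℝ)/N) := by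
    intro j hj
    have hmem := fk_mem j hj
    rw [him] at hmem
    obtain ⟨s, hs, hsk⟩ := hmem
    have h2 : dist a (γ s) = s * dist a b := param_dist_left hγ hs
    rw [hsk] at h2
    have h3 : dist a (f j) = (j:ℝ) * g := by rw [← hf0]; exact exact_dist j hj
    rw [h3, hgval] at h2
    have hs' : s = (j:ℝ)/N := by
      apply mul_right_cancel₀ (ne_of_gt hd0)
      rw [← h2]
      field_simp
    rw [← hsk, hs']
  have e1 : dist (f k) (γ t) = (t - (k:ℝ)/N) * dist a b := by
    rw [hfkγ k (by omega)]
    rw [hγ.2.2 ((k:ℝ)/N) hmemk t ht, abs_of_nonpos (by linarith [hbound.1])]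
    ring
  have e2 : dist (γ t) (f (k+1)) = (((k:ℝ)+1)/N - t) * dist a b := by
    rw [hfkγ (k+1) hk1N]
    push_cast
    rw [hγ.2.2 t ht (((k:ℝ)+1)/N) hmemk1, abs_of_nonpos (by linarith [hbound.2])]
    ring
  have e3 : dist (f k) (f (k+1)) = g := gapeq k (by omega)
  have hadd : dist (f k) (γ t) + dist (γ t) (f (k+1)) = dist (f k) (f (k+1)) := by
    rw [e1, e2, e3, hgval]
    field_simp
    ring
  have hzseg : γ t ∈ seg (f k) (f (k+1)) := between_mem_seg seg hseg huniq hadd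
  have hgap : dist (f k) (f (k+1)) < ε := by
    rw [e3]
    have := hfgap k (by omega)
    rw [← e3]
    calc dist (f k) (f (k+1)) ≤ ε/3 := this
      _ < ε := by linarith
  exact hshort (f k) (hfC k) (f (k+1)) (hfC (k+1)) hgap hzseg

end Helpers

/-- In a CAT(0) space, a compact, connected, locally convex subset
is convex. -/
theorem convex_of_compact_connected_locallyConvex {X : Type*} [MetricSpace X]
    (seg : X → X → Set X)
    (hseg : ∀ x y : X, IsGeodSeg (seg x y) x y)
    (huniq : ∀ (x y : X) (S : Set X), IsGeodSeg S x y → S = seg x y)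
    (hcat : CAT0Ineq X)
    (C : Set X) (hcomp : IsCompact C) (hconn : IsPreconnected C)
    (hloc : LocallyConvexIn seg C) :
    SegConvex seg C := by
  intro x hx y hy
  by_cases hxy : x = y
  · subst hxy
    obtain ⟨γ, hγ, him⟩ := exists_param seg hseg x x
    intro z hz
    rw [him] at hz
    obtain ⟨t, ht, rfl⟩ := hz
    have h : dist x (γ t) = 0 := by
      rw [param_dist_left hγ ht, dist_self, mul_zero]
    rw [← dist_eq_zero.1 h]
    exact hx
  · obtain ⟨ε, hε, hshort⟩ := uniform_eps seg hcomp hloc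
    obtain ⟨N, c, h0, hN, hC, hgap⟩ := chain_exists hconn
      (by positivity : (0:ℝ) < ε/3) hx hy
    exact seg_subset_of_chain seg hseg huniq hcat hcomp hε hshort hxy h0 hN hC hgap
end
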